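/- arXiv:math/0510556 — 2 statements merged into one kernel-verified Lean document; each statement's English description precedes it below -/
import Mathlib

section
/- Let X = ℤ^d and P the kernel with p(x, x+e_i) = p_i^+, p(x, x-e_i) = p_i^-, where Σ_i (p_i^+ + p_i^-) = 1 and P is irreducible. Then ρ(P) = 2 Σ_{i=1}^d √(p_i^+ p_i^-). -/
open Filter
open scoped ENNReal

/-- `matPow p n x y` is the `(x,y)` entry of the `n`-th matrix power of the kernel `p`,
i.e. the `n`-step transition probability `p^{(n)}(x,y)`. -/
noncomputable def matPow {X : Type} [DecidableEq X] (p : X → X → ℝ) : ℕ → X → X → ℝ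
  | 0, x, y => if x = y then 1 else 0
  | n + 1, x, y => ∑' z, p x z * matPow p n z y

/-- `p` is a stochastic kernel: nonnegative entries and rows summing to `1`. -/
def IsStochastic {X : Type} (p : X → X → ℝ) : Prop :=
  (∀ x y, 0 ≤ p x y) ∧ ∀ x, HasSum (p x) 1

/-- Irreducibility: any state can be reached from any state in some number of steps. -/
def IsIrreducibleKernel {X : Type} [DecidableEq X] (p : X → X → ℝ) : Prop :=
  ∀ x y, ∃ n, 0 < matPow p n x y

/-- The spectral radius `ρ(P) = limsup_n p^{(n)}(x,x)^{1/n}`. -/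
noncomputable def specRad {X : Type} [DecidableEq X] (p : X → X → ℝ) (x : X) : ℝ :=
  limsup (fun n => (matPow p n x x) ^ ((n : ℝ)⁻¹)) atTop

/-!
Irreducibility forces every `p⁺ i` and `p⁻ i` to be positive. Conjugating the kernel by the
exponential `x ↦ ∏ i, c i ^ x i` with `c i = √(p⁺ i / p⁻ i)` (a Doob transform) does not change
return probabilities and turns the walk into the symmetric one with weights
`s i = √(p⁺ i * p⁻ i)`, whose `n`-step rows have total mass `ρ ^ n`, `ρ = 2 ∑ i, s i`.
Hence `p⁽ⁿ⁾(0,0) ≤ ρ ^ n`, while by symmetry and Cauchy–Schwarz over the `(2n+1)^d` sites within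
`n` steps, `p⁽²ⁿ⁾(0,0) = ∑ z, p⁽ⁿ⁾(0,z) ^ 2 ≥ ρ ^ (2n) / (2n+1)^d`; the polynomial factor
disappears under the `2n`-th root.
-/

open Topology

theorem matPow_eq_zero_of_lt {X α : Type} [DecidableEq X] [Preorder α] {p : X → X → ℝ}
    (f : X → α) (hf : ∀ x y, p x y ≠ 0 → f y ≤ f x) :
    ∀ n x y, f x < f y → matPow p n x y = 0
  | 0, x, y, hxy => if_neg fun h => (h ▸ hxy).false
  | n + 1, x, y, hxy => by
    rw [matPow]
    refine (tsum_congr fun z => ?_).trans tsum_zero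
    by_cases hz : p x z = 0
    · rw [hz, zero_mul]
    · rw [matPow_eq_zero_of_lt f hf n z y ((hf x z hz).trans_lt hxy), mul_zero]

theorem limsup_eq_of_eventually_le_of_tendsto_comp {ι κ : Type*} {l : Filter ι} {l' : Filter κ}
    [l'.NeBot] {v : ι → ℝ} {φ : κ → ι} {ρ : ℝ} (hφ : Tendsto φ l' l) (hv : ∀ i, 0 ≤ v i)
    (hle : ∀ᶠ i in l, v i ≤ ρ) (hlim : Tendsto (v ∘ φ) l' (𝓝 ρ)) :
    limsup v l = ρ := by
  have : l.NeBot := hφ.neBot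
  refine le_antisymm (limsup_le_of_le (isCoboundedUnder_le_of_le l hv) hle) ?_
  rw [← hlim.limsup_eq]
  exact hφ.limsup_comp_le_limsup (isCoboundedUnder_le_of_le _ hv)
    (isBoundedUnder_of_eventually_le hle)

theorem tendsto_pow_rpow_inv_two_mul (d : ℕ) :
    Tendsto (fun n : ℕ => ((2 * n + 1 : ℝ) ^ d) ^ ((2 * n : ℕ) : ℝ)⁻¹) atTop (𝓝 1) := by
  have h := (tendsto_rpow_div_mul_add d 1 (-1) one_ne_zero.symm).comp
    (tendsto_atTop_add_const_right _ 1 (tendsto_natCast_atTop_atTop.const_mul_atTop two_pos))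
  refine h.congr fun n => ?_
  rw [Function.comp_apply, ← Real.rpow_natCast, ← Real.rpow_mul (by positivity)]
  congr 1
  push_cast
  ring

theorem limsup_rpow_inv_eq {u : ℕ → ℝ} {ρ : ℝ} (d : ℕ) (hρ : 0 ≤ ρ) (hu : ∀ n, 0 ≤ u n)
    (hle : ∀ n, u n ≤ ρ ^ n) (hge : ∀ n, ρ ^ (2 * n) ≤ (2 * n + 1) ^ d * u (2 * n)) :
    limsup (fun n : ℕ => u n ^ (n : ℝ)⁻¹) atTop = ρ := by
  have root_le {n : ℕ} (hn : n ≠ 0) : u n ^ (n : ℝ)⁻¹ ≤ ρ :=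
    (Real.rpow_le_rpow (hu n) (hle n) (by positivity)).trans_eq (Real.pow_rpow_inv_natCast hρ hn)
  have le_root {n : ℕ} (hn : n ≠ 0) :
      ρ / ((2 * n + 1 : ℝ) ^ d) ^ ((2 * n : ℕ) : ℝ)⁻¹ ≤ u (2 * n) ^ ((2 * n : ℕ) : ℝ)⁻¹ := by
    have hpos : (0 : ℝ) < (2 * n + 1) ^ d := by positivity
    have := Real.rpow_le_rpow (by positivity) ((div_le_iff₀' hpos).2 (hge n))
      (by positivity : (0 : ℝ) ≤ ((2 * n : ℕ) : ℝ)⁻¹)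
    rwa [Real.div_rpow (by positivity) hpos.le, Real.pow_rpow_inv_natCast hρ (by omega)] at this
  refine limsup_eq_of_eventually_le_of_tendsto_comp (tendsto_id.const_mul_atTop' two_pos)
    (fun n => Real.rpow_nonneg (hu n) _) (eventually_ne_atTop 0 |>.mono fun n => root_le) ?_
  refine tendsto_of_tendsto_of_tendsto_of_le_of_le' ?_ tendsto_const_nhds
    (eventually_ne_atTop 0 |>.mono fun n => le_root)
    (eventually_ne_atTop 0 |>.mono fun n hn => root_le (n := 2 * n) (by omega))
  have := (tendsto_const_nhds (x := ρ)).div (tendsto_pow_rpow_inv_two_mul d) one_ne_zero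
  rwa [div_one] at this

namespace ZdWalk

variable {d : ℕ}

def ker (a b : Fin d → ℝ) (x y : Fin d → ℤ) : ℝ :=
  ∑ i, ((if y = x + Pi.single i 1 then a i else 0) +
        (if y = x - Pi.single i 1 then b i else 0))

noncomputable def ball (n : ℕ) (x : Fin d → ℤ) : Finset (Fin d → ℤ) :=
  Finset.Icc (fun j => x j - n) (fun j => x j + n)

theorem mem_ball {n : ℕ} {x y : Fin d → ℤ} :
    y ∈ ball n x ↔ ∀ j, x j - n ≤ y j ∧ y j ≤ x j + n := by
  simp [ball, Pi.le_def, forall_and]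

theorem self_mem_ball (n : ℕ) (x : Fin d → ℤ) : x ∈ ball n x :=
  mem_ball.2 fun _ => by omega

theorem ball_zero (x : Fin d → ℤ) : ball 0 x = {x} := by
  ext y
  simp only [mem_ball, Finset.mem_singleton, Nat.cast_zero, sub_zero, add_zero,
    ← le_antisymm_iff, funext_iff, eq_comm]

theorem ball_subset_ball_add {k m : ℕ} {x z : Fin d → ℤ} (hz : z ∈ ball k x) :
    ball m z ⊆ ball (m + k) x := fun w hw => mem_ball.2 fun j => by
  have := mem_ball.1 hz j
  have := mem_ball.1 hw j
  push_cast
  omega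

theorem card_ball (n : ℕ) (x : Fin d → ℤ) : (ball n x).card = (2 * n + 1) ^ d := by
  have (j : Fin d) : (x j + n + 1 - (x j - n)).toNat = 2 * n + 1 := by omega
  simp [ball, Pi.card_Icc, Int.card_Icc, this]

theorem add_single_mem_ball (x : Fin d → ℤ) (i : Fin d) : x + Pi.single i 1 ∈ ball 1 x :=
  mem_ball.2 fun j => by simp only [Pi.add_apply, Pi.single_apply]; split_ifs <;> omega

theorem sub_single_mem_ball (x : Fin d → ℤ) (i : Fin d) : x - Pi.single i 1 ∈ ball 1 x :=
  mem_ball.2 fun j => by simp only [Pi.sub_apply, Pi.single_apply]; split_ifs <;> omega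

theorem add_single_ne_sub_single (x : Fin d → ℤ) (i : Fin d) :
    x + Pi.single i 1 ≠ x - Pi.single i 1 := fun h => by
  have := congrFun h i
  simp at this
  omega

theorem ker_eq_zero_of_notMem_ball {a b : Fin d → ℝ} {x y : Fin d → ℤ} (hy : y ∉ ball 1 x) :
    ker a b x y = 0 :=
  Finset.sum_eq_zero fun i _ => by
    rw [if_neg (by rintro rfl; exact hy (add_single_mem_ball x i)),
      if_neg (by rintro rfl; exact hy (sub_single_mem_ball x i)), add_zero]

theorem exists_of_ker_ne_zero {a b : Fin d → ℝ} {x y : Fin d → ℤ} (h : ker a b x y ≠ 0) :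
    ∃ i, (y = x + Pi.single i 1 ∧ a i ≠ 0) ∨ (y = x - Pi.single i 1 ∧ b i ≠ 0) := by
  obtain ⟨i, -, hi⟩ := Finset.exists_ne_zero_of_sum_ne_zero h
  refine ⟨i, ?_⟩
  split_ifs at hi with h₁ h₂ h₂
  · exact absurd (h₁.symm.trans h₂) (add_single_ne_sub_single x i)
  · exact Or.inl ⟨h₁, by simpa using hi⟩
  · exact Or.inr ⟨h₂, by simpa using hi⟩
  · simp at hi

theorem matPow_succ_eq_sum (a b : Fin d → ℝ) (n : ℕ) (x y : Fin d → ℤ) :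
    matPow (ker a b) (n + 1) x y = ∑ z ∈ ball 1 x, ker a b x z * matPow (ker a b) n z y :=
  tsum_eq_sum fun z hz => by rw [ker_eq_zero_of_notMem_ball hz, zero_mul]

theorem matPow_eq_zero_of_notMem_ball {a b : Fin d → ℝ} :
    ∀ {n : ℕ} {x y : Fin d → ℤ}, y ∉ ball n x → matPow (ker a b) n x y = 0
  | 0, x, y, hy => if_neg fun h => hy (by rw [ball_zero, h, Finset.mem_singleton])
  | n + 1, x, y, hy => by
    refine (matPow_succ_eq_sum a b n x y).trans (Finset.sum_eq_zero fun z hz => ?_)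
    rw [matPow_eq_zero_of_notMem_ball fun h => hy (ball_subset_ball_add hz h), mul_zero]

theorem matPow_zero_self (a b : Fin d → ℝ) (x : Fin d → ℤ) : matPow (ker a b) 0 x x = 1 :=
  if_pos rfl

theorem matPow_one (a b : Fin d → ℝ) (x y : Fin d → ℤ) :
    matPow (ker a b) 1 x y = ker a b x y := by
  simp [matPow]

theorem matPow_nonneg {a b : Fin d → ℝ} (ha : ∀ i, 0 ≤ a i) (hb : ∀ i, 0 ≤ b i) :
    ∀ n x y, 0 ≤ matPow (ker a b) n x y
  | 0, x, y => by rw [matPow]; positivity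
  | n + 1, x, y => by
    rw [matPow_succ_eq_sum]
    refine Finset.sum_nonneg fun z _ => mul_nonneg ?_ (matPow_nonneg ha hb n z y)
    exact Finset.sum_nonneg fun i _ =>
      add_nonneg (by split_ifs <;> simp [ha]) (by split_ifs <;> simp [hb])

theorem matPow_add (a b : Fin d → ℝ) (n : ℕ) :
    ∀ m x y, matPow (ker a b) (m + n) x y =
      ∑ z ∈ ball m x, matPow (ker a b) m x z * matPow (ker a b) n z y
  | 0, x, y => by rw [Nat.zero_add, ball_zero, Finset.sum_singleton, matPow_zero_self, one_mul]
  | m + 1, x, y => by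
    have step (z) (hz : z ∈ ball 1 x) : ker a b x z * matPow (ker a b) (m + n) z y =
        ∑ w ∈ ball (m + 1) x, ker a b x z * (matPow (ker a b) m z w * matPow (ker a b) n w y) := by
      rw [matPow_add a b n m z y, Finset.mul_sum]
      refine Finset.sum_subset (ball_subset_ball_add hz) fun w _ hw => ?_
      rw [matPow_eq_zero_of_notMem_ball hw, zero_mul, mul_zero]
    rw [Nat.add_right_comm, matPow_succ_eq_sum, Finset.sum_congr rfl step, Finset.sum_comm]
    refine Finset.sum_congr rfl fun w _ => ?_
    rw [matPow_succ_eq_sum, Finset.sum_mul]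
    exact Finset.sum_congr rfl fun z _ => by ring

theorem matPow_succ_eq_tsum (a b : Fin d → ℝ) (n : ℕ) (x y : Fin d → ℤ) :
    matPow (ker a b) (n + 1) x y = ∑' z, matPow (ker a b) n x z * ker a b z y := by
  rw [matPow_add, tsum_eq_sum fun z hz => by rw [matPow_eq_zero_of_notMem_ball hz, zero_mul]]
  simp only [matPow_one]

theorem sum_ker (a b : Fin d → ℝ) (x : Fin d → ℤ) :
    ∑ y ∈ ball 1 x, ker a b x y = ∑ i, (a i + b i) := by
  unfold ker
  rw [Finset.sum_comm]
  refine Finset.sum_congr rfl fun i _ => ?_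
  rw [Finset.sum_add_distrib, Finset.sum_ite_eq', Finset.sum_ite_eq',
    if_pos (add_single_mem_ball x i), if_pos (sub_single_mem_ball x i)]

theorem sum_matPow (a b : Fin d → ℝ) :
    ∀ n x, ∑ y ∈ ball n x, matPow (ker a b) n x y = (∑ i, (a i + b i)) ^ n
  | 0, x => by rw [ball_zero, Finset.sum_singleton, matPow_zero_self, pow_zero]
  | n + 1, x => by
    have row (z) (hz : z ∈ ball 1 x) :
        ∑ y ∈ ball (n + 1) x, matPow (ker a b) n z y = (∑ i, (a i + b i)) ^ n := by
      rw [← sum_matPow a b n z]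
      exact (Finset.sum_subset (ball_subset_ball_add hz) fun w _ hw =>
        matPow_eq_zero_of_notMem_ball hw).symm
    simp only [matPow_succ_eq_sum]
    rw [Finset.sum_comm, Finset.sum_congr rfl fun z hz => by rw [← Finset.mul_sum, row z hz],
      ← Finset.sum_mul, sum_ker, pow_succ']

theorem ker_comm (s : Fin d → ℝ) (x y : Fin d → ℤ) : ker s s x y = ker s s y x := by
  refine Finset.sum_congr rfl fun i _ => ?_
  rw [add_comm]
  congr 1 <;> refine if_congr ?_ rfl rfl
  · exact eq_sub_iff_add_eq.trans eq_comm
  · exact (eq_sub_iff_add_eq.trans eq_comm).symm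

theorem matPow_comm (s : Fin d → ℝ) : ∀ n (x y : Fin d → ℤ),
    matPow (ker s s) n x y = matPow (ker s s) n y x
  | 0, x, y => if_congr eq_comm rfl rfl
  | n + 1, x, y => by
    rw [matPow, matPow_succ_eq_tsum]
    exact tsum_congr fun z => by rw [ker_comm, matPow_comm s n z y, mul_comm]

theorem matPow_le_pow {s : Fin d → ℝ} (hs : ∀ i, 0 ≤ s i) (n : ℕ) (x : Fin d → ℤ) :
    matPow (ker s s) n x x ≤ (∑ i, (s i + s i)) ^ n := by
  rw [← sum_matPow s s n x]
  exact Finset.single_le_sum (fun y _ => matPow_nonneg hs hs n x y) (self_mem_ball n x)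

theorem pow_le_card_mul_matPow (s : Fin d → ℝ) (n : ℕ) (x : Fin d → ℤ) :
    (∑ i, (s i + s i)) ^ (2 * n) ≤ (2 * n + 1) ^ d * matPow (ker s s) (2 * n) x x := by
  have hsq : matPow (ker s s) (2 * n) x x = ∑ z ∈ ball n x, matPow (ker s s) n x z ^ 2 := by
    rw [two_mul, matPow_add]
    exact Finset.sum_congr rfl fun z _ => by rw [matPow_comm s n z x, sq]
  have := sq_sum_le_card_mul_sum_sq (s := ball n x) (f := fun z => matPow (ker s s) n x z)
  rw [sum_matPow, card_ball, ← pow_mul, mul_comm n 2] at this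
  rw [hsq]
  exact_mod_cast this

noncomputable def expChar (c : Fin d → ℝ) (x : Fin d → ℤ) : ℝ := ∏ i, c i ^ x i

theorem expChar_ne_zero {c : Fin d → ℝ} (hc : ∀ i, c i ≠ 0) (x : Fin d → ℤ) : expChar c x ≠ 0 :=
  Finset.prod_ne_zero_iff.2 fun i _ => zpow_ne_zero _ (hc i)

theorem expChar_add {c : Fin d → ℝ} (hc : ∀ i, c i ≠ 0) (x y : Fin d → ℤ) :
    expChar c (x + y) = expChar c x * expChar c y := by
  simp only [expChar, Pi.add_apply, zpow_add₀ (hc _), Finset.prod_mul_distrib]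

theorem expChar_single (c : Fin d → ℝ) (i : Fin d) : expChar c (Pi.single i 1) = c i := by
  rw [expChar, Finset.prod_eq_single i (fun j _ hj => by simp [hj]) (by simp)]
  simp

theorem ker_mul_expChar {a b c s : Fin d → ℝ} (hc : ∀ i, c i ≠ 0) (ha : ∀ i, a i = c i * s i)
    (hb : ∀ i, s i = c i * b i) (x y : Fin d → ℤ) :
    ker a b x y * expChar c x = expChar c y * ker s s x y := by
  simp only [ker, Finset.sum_mul, Finset.mul_sum]
  refine Finset.sum_congr rfl fun i _ => ?_
  have hdown : expChar c (x - Pi.single i 1) * c i = expChar c x := by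
    rw [← expChar_single c i, ← expChar_add hc, sub_add_cancel]
  split_ifs with h₁ h₂ h₂
  · exact absurd (h₁.symm.trans h₂) (add_single_ne_sub_single x i)
  · rw [h₁, expChar_add hc, expChar_single, ha]; ring
  · rw [h₂, ← hdown, hb]; ring
  · ring

theorem matPow_mul_expChar {a b c s : Fin d → ℝ} (hc : ∀ i, c i ≠ 0) (ha : ∀ i, a i = c i * s i)
    (hb : ∀ i, s i = c i * b i) : ∀ n (x y : Fin d → ℤ),
    matPow (ker a b) n x y * expChar c x = expChar c y * matPow (ker s s) n x y
  | 0, x, y => by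
    simp only [matPow]
    split_ifs with h
    · rw [h]; ring
    · ring
  | n + 1, x, y => by
    simp only [matPow, ← tsum_mul_right, ← tsum_mul_left]
    refine tsum_congr fun z => ?_
    linear_combination matPow (ker a b) n z y * ker_mul_expChar hc ha hb x z +
      ker s s x z * matPow_mul_expChar hc ha hb n z y

theorem matPow_self_eq_sqrt {a b : Fin d → ℝ} (ha : ∀ i, 0 < a i) (hb : ∀ i, 0 < b i)
    (n : ℕ) (x : Fin d → ℤ) :
    matPow (ker a b) n x x =
      matPow (ker (fun i => √(a i * b i)) (fun i => √(a i * b i))) n x x := by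
  have hsb (i : Fin d) : √(b i) ≠ 0 := Real.sqrt_ne_zero'.2 (hb i)
  have hc (i : Fin d) : √(a i) / √(b i) ≠ 0 := div_ne_zero (Real.sqrt_ne_zero'.2 (ha i)) (hsb i)
  have ha' (i : Fin d) : a i = √(a i) / √(b i) * √(a i * b i) := by
    rw [Real.sqrt_mul (ha i).le]
    field_simp [hsb i]
    exact (Real.sq_sqrt (ha i).le).symm
  have hb' (i : Fin d) : √(a i * b i) = √(a i) / √(b i) * b i := by
    rw [Real.sqrt_mul (ha i).le]
    field_simp [hsb i]
    rw [Real.sq_sqrt (hb i).le]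
  exact mul_right_cancel₀ (expChar_ne_zero hc x)
    ((matPow_mul_expChar hc ha' hb' n x x).trans (mul_comm _ _))

theorem ne_zero_of_isIrreducibleKernel {a b : Fin d → ℝ} (h : IsIrreducibleKernel (ker a b))
    (i : Fin d) : a i ≠ 0 ∧ b i ≠ 0 := by
  have step {x y : Fin d → ℤ} (hxy : ker a b x y ≠ 0) :
      (a i = 0 → y i ≤ x i) ∧ (b i = 0 → x i ≤ y i) := by
    obtain ⟨j, ⟨rfl, hj⟩ | ⟨rfl, hj⟩⟩ := exists_of_ker_ne_zero hxy <;>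
      refine ⟨fun h₀ => ?_, fun h₀ => ?_⟩ <;>
      rcases eq_or_ne i j with rfl | hij <;> simp_all
  constructor
  · intro h₀
    obtain ⟨n, hn⟩ := h 0 (Pi.single i 1)
    exact hn.ne' (matPow_eq_zero_of_lt (· i) (fun x y hxy => (step hxy).1 h₀) n _ _ (by simp))
  · intro h₀
    obtain ⟨n, hn⟩ := h (Pi.single i 1) 0
    exact hn.ne' (matPow_eq_zero_of_lt (fun x => -x i)
      (fun x y hxy => neg_le_neg ((step hxy).2 h₀)) n _ _ (by simp))

theorem specRad_ker_self {s : Fin d → ℝ} (hs : ∀ i, 0 ≤ s i) (x : Fin d → ℤ) :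
    specRad (ker s s) x = 2 * ∑ i, s i := by
  rw [two_mul, ← Finset.sum_add_distrib]
  exact limsup_rpow_inv_eq d (Finset.sum_nonneg fun i _ => add_nonneg (hs i) (hs i))
    (matPow_nonneg hs hs · x x) (matPow_le_pow hs · x) (pow_le_card_mul_matPow s · x)

theorem specRad_ker_eq_sqrt {a b : Fin d → ℝ} (ha : ∀ i, 0 < a i) (hb : ∀ i, 0 < b i)
    (x : Fin d → ℤ) :
    specRad (ker a b) x = 2 * ∑ i, √(a i * b i) := by
  rw [← specRad_ker_self (fun i => Real.sqrt_nonneg _) x, specRad, specRad]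
  simp_rw [matPow_self_eq_sqrt ha hb]

end ZdWalk

theorem specRad_walk_Zd_general (d : ℕ) (pp pm : Fin d → ℝ)
    (hpp : ∀ i, 0 ≤ pp i) (hpm : ∀ i, 0 ≤ pm i)
    (hirr : IsIrreducibleKernel (fun x y : Fin d → ℤ =>
      ∑ i, ((if y = x + Pi.single i 1 then pp i else 0) +
            (if y = x - Pi.single i 1 then pm i else 0)))) :
    specRad (fun x y : Fin d → ℤ =>
      ∑ i, ((if y = x + Pi.single i 1 then pp i else 0) +
            (if y = x - Pi.single i 1 then pm i else 0))) 0 =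
      2 * ∑ i, Real.sqrt (pp i * pm i) := by
  have hne := ZdWalk.ne_zero_of_isIrreducibleKernel (a := pp) (b := pm) hirr
  exact ZdWalk.specRad_ker_eq_sqrt (fun i => (hpp i).lt_of_ne' (hne i).1)
    (fun i => (hpm i).lt_of_ne' (hne i).2) 0

/-- The anisotropic nearest-neighbour random walk on `ℤ^d` with
`p(x, x+e_i) = p⁺ i`, `p(x, x-e_i) = p⁻ i`, `∑ i (p⁺ i + p⁻ i) = 1`, irreducible,
has spectral radius `2 ∑ i √(p⁺ i · p⁻ i)`. -/
theorem specRad_walk_Zd (d : ℕ) (hd : 0 < d) (pp pm : Fin d → ℝ)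
    (hpp : ∀ i, 0 ≤ pp i) (hpm : ∀ i, 0 ≤ pm i)
    (hsum : ∑ i, (pp i + pm i) = 1)
    (hirr : IsIrreducibleKernel (fun x y : Fin d → ℤ =>
      ∑ i, ((if y = x + Pi.single i 1 then pp i else 0) +
            (if y = x - Pi.single i 1 then pm i else 0)))) :
    specRad (fun x y : Fin d → ℤ =>
      ∑ i, ((if y = x + Pi.single i 1 then pp i else 0) +
            (if y = x - Pi.single i 1 then pm i else 0))) 0 =
      2 * ∑ i, Real.sqrt (pp i * pm i) :=
  specRad_walk_Zd_general d pp pm hpp hpm hirr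
end

section
/- Let ρ ∈ (0,1] and m > 1/ρ. For a BMC with constant mean offspring m on an irreducible chain (X,P) with ρ(P) = ρ, started at x0, the number of particles located at x0 at times nk (for suitable k with p^{(k)}(x0,x0) m^k > 1), counting only descendants through x0-visits at the observation times, stochastically dominates a supercritical Galton–Watson process; hence α(x0) > 0. -/
/-!
Observe the branching Markov chain only at times `k, 2k, 3k, …` and keep only the particles
at `x₀`, where `k` is chosen, by the definition of `ρ(P)` as a limsup, with
`p⁽ᵏ⁾(x₀,x₀) mᵏ > 1`. Each kept particle has on average `p⁽ᵏ⁾(x₀,x₀) mᵏ > 1` kept descendants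
at the next observation time, and distinct particles evolve independently, so this pruned
process is a supercritical Galton–Watson process. Its offspring generating function `f` has a
point `s < 1` with `f(s) ≤ s`, hence the probability that `x₀` is empty at time `Nk`, which is
at most `f^[N](0)`, stays below `s`, and `x₀` is occupied at arbitrarily late times with
probability at least `1 - s > 0`.
-/

open Filter
open scoped ENNReal

/-! ### Branching Markov Chains

A BMC on an irreducible chain `(X, K)`: each particle at `x` produces `k ≥ 1` offspring
with probability `(off x) k` and the offspring move independently according to the
kernel `K`. Configurations of particles are recorded as lists of positions. -/

/-- The law of `n` i.i.d. moves from `x` according to the kernel `K`. -/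
noncomputable def iidMoves {X : Type} (K : X → PMF X) (x : X) : ℕ → PMF (List X)
  | 0 => PMF.pure []
  | n + 1 => (K x).bind fun y => (iidMoves K x n).bind fun l => PMF.pure (y :: l)

/-- One particle at `x` branches (according to `off x`) and its children each move
one step (according to `K`). -/
noncomputable def branchStep {X : Type} (K : X → PMF X) (off : X → PMF ℕ) (x : X) :
    PMF (List X) :=
  (off x).bind fun k => iidMoves K x k

/-- One step of the BMC: every particle of the configuration branches and moves
independently. -/
noncomputable def configStep {X : Type} (K : X → PMF X) (off : X → PMF ℕ) :
    List X → PMF (List X)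
  | [] => PMF.pure []
  | x :: c => (branchStep K off x).bind fun l₁ =>
      (configStep K off c).bind fun l₂ => PMF.pure (l₁ ++ l₂)

/-- The law of the trajectory of configurations up to time `n` (a list of `n+1`
configurations), starting from the configuration `c`. -/
noncomputable def bmcPaths {X : Type} (K : X → PMF X) (off : X → PMF ℕ) :
    ℕ → List X → PMF (List (List X))
  | 0, c => PMF.pure [c]
  | n + 1, c => (configStep K off c).bind fun c' =>
      (bmcPaths K off n c').bind fun tr => PMF.pure (c :: tr)

/-- `alpha K off x` is the probability that, starting the BMC with a single particle
at `x`, the state `x` is visited by particles of the cloud at infinitely many times: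
`P(x visited at some time ≥ N)` decreases to it as `N → ∞`, and each of these is the
increasing limit over finite horizons `M`. -/
noncomputable def alphaBMC {X : Type} [DecidableEq X] (K : X → PMF X) (off : X → PMF ℕ)
    (x : X) : ℝ≥0∞ :=
  ⨅ N : ℕ, ⨆ M : ℕ,
    (bmcPaths K off M [x]).toOuterMeasure {tr | ∃ n, N ≤ n ∧ x ∈ tr.getD n []}

/-- The one-step transition probabilities of the PMF kernel `K`, as a real kernel. -/
noncomputable def kerReal {X : Type} (K : X → PMF X) : X → X → ℝ :=
  fun x y => (K x y).toReal

open Topology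

namespace ENNReal

theorem pow_add_mul_geom_sum {s : ℝ≥0∞} (hs : s ≤ 1) (n : ℕ) :
    s ^ n + (1 - s) * ∑ i ∈ Finset.range n, s ^ i = 1 := by
  induction n with
  | zero => simp
  | succ n ih =>
    calc s ^ (n + 1) + (1 - s) * ∑ i ∈ Finset.range (n + 1), s ^ i
        = (s + (1 - s)) * s ^ n + (1 - s) * ∑ i ∈ Finset.range n, s ^ i := by
          rw [Finset.sum_range_succ]; ring
      _ = 1 := by rw [add_tsub_cancel_of_le hs, one_mul, ih]

theorem pow_add_mul_min_le_one {s : ℝ≥0∞} (hs : s ≤ 1) (n J : ℕ) :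
    s ^ n + (1 - s) * (s ^ (J - 1) * (min n J : ℕ)) ≤ 1 := by
  calc s ^ n + (1 - s) * (s ^ (J - 1) * (min n J : ℕ))
      = s ^ n + (1 - s) * ∑ _i ∈ Finset.range (min n J), s ^ (J - 1) := by
        simp [mul_comm]
    _ ≤ s ^ n + (1 - s) * ∑ i ∈ Finset.range n, s ^ i := by
        gcongr s ^ n + (1 - s) * ?_
        calc ∑ _i ∈ Finset.range (min n J), s ^ (J - 1)
            ≤ ∑ i ∈ Finset.range (min n J), s ^ i :=
              Finset.sum_le_sum fun i hi =>
                pow_le_pow_right_of_le_one' hs (by rw [Finset.mem_range] at hi; omega)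
          _ ≤ ∑ i ∈ Finset.range n, s ^ i :=
              Finset.sum_le_sum_of_subset (Finset.range_mono (min_le_left n J))
    _ = 1 := pow_add_mul_geom_sum hs n

end ENNReal

namespace PMF

variable {α β γ : Type*}

noncomputable def expect (p : PMF α) (f : α → ℝ≥0∞) : ℝ≥0∞ := ∑' a, p a * f a

theorem expect_pure (a : α) (f : α → ℝ≥0∞) : (pure a).expect f = f a := by
  simp [expect, pure_apply]

theorem expect_bind (p : PMF α) (g : α → PMF β) (f : β → ℝ≥0∞) :
    (p.bind g).expect f = p.expect fun a => (g a).expect f := by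
  simp only [expect, bind_apply, ← ENNReal.tsum_mul_right, ← ENNReal.tsum_mul_left, mul_assoc]
  exact ENNReal.tsum_comm

theorem expect_bind_bind_pure (p : PMF α) (q : PMF β) (u : α → β → γ) (f : γ → ℝ≥0∞) :
    (p.bind fun a => q.bind fun b => pure (u a b)).expect f =
      p.expect fun a => q.expect fun b => f (u a b) := by
  simp only [expect_bind, expect_pure]

theorem expect_mono (p : PMF α) {f g : α → ℝ≥0∞} (h : f ≤ g) : p.expect f ≤ p.expect g :=
  ENNReal.tsum_le_tsum fun a => mul_le_mul_right (h a) _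

theorem expect_const (p : PMF α) (c : ℝ≥0∞) : p.expect (fun _ => c) = c := by
  rw [expect, ENNReal.tsum_mul_right, p.tsum_coe, one_mul]

theorem expect_add (p : PMF α) (f g : α → ℝ≥0∞) :
    p.expect (fun a => f a + g a) = p.expect f + p.expect g := by
  simp only [expect, mul_add]
  exact ENNReal.tsum_add

theorem expect_const_mul (p : PMF α) (c : ℝ≥0∞) (f : α → ℝ≥0∞) :
    p.expect (fun a => c * f a) = c * p.expect f := by
  simp only [expect, ← ENNReal.tsum_mul_left, mul_left_comm]

theorem expect_mul_const (p : PMF α) (f : α → ℝ≥0∞) (c : ℝ≥0∞) :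
    p.expect (fun a => f a * c) = p.expect f * c := by
  simp only [expect, ← ENNReal.tsum_mul_right, mul_assoc]

theorem expect_le_one (p : PMF α) {f : α → ℝ≥0∞} (h : f ≤ 1) : p.expect f ≤ 1 :=
  (p.expect_mono h).trans (p.expect_const 1).le

theorem toOuterMeasure_eq_expect (p : PMF α) (s : Set α) :
    p.toOuterMeasure s = p.expect (s.indicator 1) := by
  rw [toOuterMeasure_apply, expect]
  congr 1 with a
  by_cases ha : a ∈ s <;> simp [ha]

theorem expect_natCast_eq_ofReal (p : PMF ℕ) {m : ℝ}
    (h : HasSum (fun k : ℕ => (k : ℝ) * (p k).toReal) m) :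
    p.expect (fun k => k) = ENNReal.ofReal m := by
  rw [← h.tsum_eq, ENNReal.ofReal_tsum_of_nonneg (fun k => by positivity) h.summable, expect]
  congr 1 with k
  rw [ENNReal.ofReal_mul (by positivity), ENNReal.ofReal_natCast,
    ENNReal.ofReal_toReal (p.apply_ne_top k), mul_comm]

/-- Truncate `Z` at `J` so that `E[min Z J] > 1`; then
`s ^ n ≤ 1 - (1 - s) s ^ (J - 1) min n J` gives the claim for `s < 1` close enough to `1`. -/
theorem exists_expect_pow_le_self (p : PMF α) (Z : α → ℕ)
    (hZ : 1 < p.expect fun a => Z a) : ∃ s < 1, (p.expect fun a => s ^ Z a) ≤ s := by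
  obtain ⟨J, hJ⟩ : ∃ J : ℕ, 1 < p.expect fun a => (min (Z a) J : ℕ) := by
    rw [expect, ENNReal.tsum_eq_iSup_sum] at hZ
    obtain ⟨F, hF⟩ := lt_iSup_iff.mp hZ
    refine ⟨F.sup Z, hF.trans_le ?_⟩
    calc ∑ a ∈ F, p a * Z a = ∑ a ∈ F, p a * (min (Z a) (F.sup Z) : ℕ) :=
          Finset.sum_congr rfl fun a ha => by rw [min_eq_left (Finset.le_sup ha)]
      _ ≤ _ := ENNReal.sum_le_tsum F
  set μ := p.expect fun a => (min (Z a) J : ℕ)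
  have hμ : μ ≠ ⊤ := ne_top_of_le_ne_top (ENNReal.natCast_ne_top J)
    ((p.expect_mono fun a => Nat.cast_le.mpr (min_le_right _ _)).trans (p.expect_const _).le)
  obtain ⟨s, hs, hs1⟩ : ∃ s < 1, 1 < s ^ (J - 1) * μ := by
    have hlim : Tendsto (fun s : ℝ≥0∞ => s ^ (J - 1) * μ) (𝓝[<] 1) (𝓝 μ) := by
      simpa using ENNReal.Tendsto.mul_const
        (((ENNReal.continuous_pow (J - 1)).tendsto 1).mono_left nhdsWithin_le_nhds) (Or.inr hμ)
    exact ((hlim.eventually (lt_mem_nhds hJ)).and self_mem_nhdsWithin).exists.imp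
      fun s hs => ⟨hs.2, hs.1⟩
  have hs' : 1 - s ≠ ⊤ := ENNReal.sub_ne_top ENNReal.one_ne_top
  refine ⟨s, hs, ENNReal.le_of_add_le_add_right hs' ?_⟩
  calc (p.expect fun a => s ^ Z a) + (1 - s)
      ≤ (p.expect fun a => s ^ Z a) + (1 - s) * (s ^ (J - 1) * μ) := by
        gcongr
        exact le_mul_of_one_le_right' hs1.le
    _ = p.expect fun a => s ^ Z a + (1 - s) * (s ^ (J - 1) * (min (Z a) J : ℕ)) := by
        rw [expect_add, expect_const_mul, expect_const_mul]
    _ ≤ 1 := p.expect_le_one fun a => ENNReal.pow_add_mul_min_le_one hs.le _ _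
    _ = s + (1 - s) := (add_tsub_cancel_of_le hs.le).symm

end PMF

theorem exists_one_lt_mul_pow_of_inv_limsup_lt {a : ℕ → ℝ} (ha : ∀ n, 0 ≤ a n) {m : ℝ}
    (hρ : 0 < limsup (fun n : ℕ => a n ^ (n : ℝ)⁻¹) atTop)
    (hm : 1 / limsup (fun n : ℕ => a n ^ (n : ℝ)⁻¹) atTop < m) :
    ∃ k : ℕ, 1 ≤ k ∧ 1 < a k * m ^ k := by
  have hm₀ : 0 < m := (one_div_pos.mpr hρ).trans hm
  have hfreq : ∃ᶠ n in atTop, m⁻¹ < a n ^ (n : ℝ)⁻¹ :=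
    frequently_lt_of_lt_limsup
      (isCoboundedUnder_le_of_le atTop fun n => Real.rpow_nonneg (ha n) _)
      (by rwa [one_div, inv_lt_comm₀ hρ hm₀] at hm)
  obtain ⟨k, hk, hk1⟩ := (hfreq.and_eventually (eventually_ge_atTop 1)).exists
  refine ⟨k, hk1, ?_⟩
  calc 1 = m⁻¹ ^ k * m ^ k := by rw [← mul_pow, inv_mul_cancel₀ hm₀.ne', one_pow]
    _ < (a k ^ (k : ℝ)⁻¹) ^ k * m ^ k :=
        mul_lt_mul_of_pos_right (pow_lt_pow_left₀ hk (by positivity) (by omega)) (by positivity)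
    _ = a k * m ^ k := by rw [Real.rpow_inv_natCast_pow (ha k) (by omega)]

section Stochastic

variable {X : Type} {p : X → X → ℝ}

theorem isStochastic_kerReal (K : X → PMF X) : IsStochastic (kerReal K) :=
  ⟨fun _ _ => ENNReal.toReal_nonneg, fun x => by
    have h := ENNReal.hasSum_toReal (f := K x) (by rw [(K x).tsum_coe]; exact ENNReal.one_ne_top)
    rwa [← ENNReal.tsum_toReal_eq (K x).apply_ne_top, (K x).tsum_coe, ENNReal.toReal_one] at h⟩

theorem IsStochastic.summable_mul (hp : IsStochastic p) {f : X → ℝ} (hf₀ : ∀ z, 0 ≤ f z)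
    (hf₁ : ∀ z, f z ≤ 1) (x : X) : Summable fun z => p x z * f z :=
  (hp.2 x).summable.of_nonneg_of_le (fun z => mul_nonneg (hp.1 x z) (hf₀ z))
    fun z => mul_le_of_le_one_right (hp.1 x z) (hf₁ z)

variable [DecidableEq X]

theorem IsStochastic.matPow_mem_Icc (hp : IsStochastic p) (n : ℕ) (x y : X) :
    matPow p n x y ∈ Set.Icc 0 1 := by
  induction n generalizing x with
  | zero => by_cases h : x = y <;> simp [matPow, h]
  | succ n ih =>
    have hs := hp.summable_mul (fun z => (ih z).1) (fun z => (ih z).2) x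
    refine ⟨tsum_nonneg fun z => mul_nonneg (hp.1 x z) (ih z).1, ?_⟩
    calc matPow p (n + 1) x y = ∑' z, p x z * matPow p n z y := rfl
      _ ≤ ∑' z, p x z :=
          hs.tsum_le_tsum (fun z => mul_le_of_le_one_right (hp.1 x z) (ih z).2) (hp.2 x).summable
      _ = 1 := (hp.2 x).tsum_eq

theorem ofReal_matPow_kerReal_succ (K : X → PMF X) (n : ℕ) (x y : X) :
    ENNReal.ofReal (matPow (kerReal K) (n + 1) x y) =
      ∑' z, K x z * ENNReal.ofReal (matPow (kerReal K) n z y) := by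
  have hK := isStochastic_kerReal K
  have h := hK.matPow_mem_Icc n
  rw [matPow, ENNReal.ofReal_tsum_of_nonneg (fun z => mul_nonneg (hK.1 x z) (h z y).1)
    (hK.summable_mul (fun z => (h z y).1) (fun z => (h z y).2) x)]
  congr 1 with z
  rw [kerReal, ENNReal.ofReal_mul ENNReal.toReal_nonneg,
    ENNReal.ofReal_toReal (PMF.apply_ne_top _ _)]

end Stochastic

namespace BranchingMarkovChain

variable {X : Type} (K : X → PMF X) (off : X → PMF ℕ)

noncomputable def configLaw : ℕ → List X → PMF (List X)
  | 0, c => PMF.pure c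
  | n + 1, c => (configStep K off c).bind (configLaw n)

theorem configStep_singleton (x : X) : configStep K off [x] = branchStep K off x := by
  simp [configStep, PMF.pure_bind, PMF.bind_pure]

theorem configStep_append (c₁ c₂ : List X) :
    configStep K off (c₁ ++ c₂) = (configStep K off c₁).bind fun l₁ =>
      (configStep K off c₂).bind fun l₂ => PMF.pure (l₁ ++ l₂) := by
  induction c₁ with
  | nil => simp [configStep, PMF.pure_bind, PMF.bind_pure]
  | cons x c₁ ih => simp [configStep, ih, PMF.bind_bind, PMF.pure_bind, List.append_assoc]

theorem configLaw_nil (n : ℕ) : configLaw K off n [] = PMF.pure [] := by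
  induction n with
  | zero => rfl
  | succ n ih => simp [configLaw, configStep, PMF.pure_bind, ih]

theorem configLaw_add (a b : ℕ) (c : List X) :
    configLaw K off (a + b) c = (configLaw K off a c).bind (configLaw K off b) := by
  induction a generalizing c with
  | zero => simp [configLaw, PMF.pure_bind]
  | succ a ih =>
    rw [Nat.add_right_comm]
    simp only [configLaw, PMF.bind_bind]
    exact congrArg _ (funext ih)

theorem configLaw_append (n : ℕ) (c₁ c₂ : List X) :
    configLaw K off n (c₁ ++ c₂) = (configLaw K off n c₁).bind fun d₁ =>
      (configLaw K off n c₂).bind fun d₂ => PMF.pure (d₁ ++ d₂) := by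
  induction n generalizing c₁ c₂ with
  | zero => simp [configLaw, PMF.pure_bind]
  | succ n ih =>
    simp only [configLaw, configStep_append, PMF.bind_bind, PMF.pure_bind, ih]
    congr 1 with l₁
    rw [PMF.bind_comm (configStep K off c₂) (configLaw K off n l₁)]

theorem map_getD_bmcPaths (n : ℕ) (c : List X) :
    (bmcPaths K off n c).map (fun tr => tr.getD n []) = configLaw K off n c := by
  induction n generalizing c with
  | zero => simp [bmcPaths, configLaw, PMF.pure_map]
  | succ n ih =>
    simp only [bmcPaths, configLaw, PMF.map_bind, PMF.pure_map, List.getD_cons_succ]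
    exact congrArg _ (funext ih)

theorem expect_iidMoves_sum (x : X) (g : X → ℝ≥0∞) (j : ℕ) :
    (iidMoves K x j).expect (fun l => (l.map g).sum) = j * (K x).expect g := by
  induction j with
  | zero => simp [iidMoves, PMF.expect_pure]
  | succ j ih =>
    simp only [iidMoves, PMF.expect_bind_bind_pure, List.map_cons, List.sum_cons,
      PMF.expect_add, PMF.expect_const, ih]
    rw [Nat.cast_succ, add_one_mul, add_comm]

variable [DecidableEq X] (x₀ : X)

noncomputable def meanCount (n : ℕ) (c : List X) : ℝ≥0∞ :=
  (configLaw K off n c).expect fun d => d.count x₀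

theorem meanCount_append (n : ℕ) (c₁ c₂ : List X) :
    meanCount K off x₀ n (c₁ ++ c₂) = meanCount K off x₀ n c₁ + meanCount K off x₀ n c₂ := by
  simp only [meanCount, configLaw_append, PMF.expect_bind_bind_pure, List.count_append,
    Nat.cast_add, PMF.expect_add, PMF.expect_const]

theorem meanCount_eq_sum (n : ℕ) (c : List X) :
    meanCount K off x₀ n c = (c.map fun z => meanCount K off x₀ n [z]).sum := by
  induction c with
  | nil => simp [meanCount, configLaw_nil, PMF.expect_pure]
  | cons y c ih => rw [← List.singleton_append, meanCount_append, ih]; simp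

theorem meanCount_succ_singleton (n : ℕ) (x : X) :
    meanCount K off x₀ (n + 1) [x] =
      (off x).expect (fun j => j) * (K x).expect fun z => meanCount K off x₀ n [z] := by
  have h (l : List X) : (configLaw K off n l).expect (fun d => (d.count x₀ : ℝ≥0∞)) =
      (l.map fun z => meanCount K off x₀ n [z]).sum := meanCount_eq_sum K off x₀ n l
  rw [meanCount, configLaw, configStep_singleton, branchStep, PMF.expect_bind, PMF.expect_bind]
  simp only [h, expect_iidMoves_sum, PMF.expect_mul_const]

theorem meanCount_singleton (M : ℝ≥0∞) (hM : ∀ x, (off x).expect (fun j => j) = M)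
    (n : ℕ) (x : X) :
    meanCount K off x₀ n [x] = M ^ n * ENNReal.ofReal (matPow (kerReal K) n x x₀) := by
  induction n generalizing x with
  | zero => by_cases h : x = x₀ <;> simp [meanCount, configLaw, PMF.expect_pure, matPow, h]
  | succ n ih =>
    rw [meanCount_succ_singleton, hM]
    simp only [ofReal_matPow_kerReal_succ, ih, PMF.expect, ← ENNReal.tsum_mul_left]
    congr 1 with z
    ring

/-- The generating function of the number of particles at `x₀`; at `s = 0` it is the
probability that `x₀` is empty, since `0 ^ 0 = 1`. -/
noncomputable def countPGF (n : ℕ) (c : List X) (s : ℝ≥0∞) : ℝ≥0∞ :=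
  (configLaw K off n c).expect fun d => s ^ d.count x₀

theorem countPGF_append (n : ℕ) (c₁ c₂ : List X) (s : ℝ≥0∞) :
    countPGF K off x₀ n (c₁ ++ c₂) s = countPGF K off x₀ n c₁ s * countPGF K off x₀ n c₂ s := by
  simp only [countPGF, configLaw_append, PMF.expect_bind_bind_pure, List.count_append, pow_add,
    PMF.expect_const_mul, PMF.expect_mul_const]

theorem countPGF_le_one (n : ℕ) (c : List X) {s : ℝ≥0∞} (hs : s ≤ 1) :
    countPGF K off x₀ n c s ≤ 1 :=
  PMF.expect_le_one _ fun _ => pow_le_one₀ zero_le hs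

theorem countPGF_mono (n : ℕ) (c : List X) {s t : ℝ≥0∞} (h : s ≤ t) :
    countPGF K off x₀ n c s ≤ countPGF K off x₀ n c t :=
  PMF.expect_mono _ fun _ => pow_le_pow_left' h _

theorem countPGF_le_pow_count (n : ℕ) (c : List X) {s : ℝ≥0∞} (hs : s ≤ 1) :
    countPGF K off x₀ n c s ≤ countPGF K off x₀ n [x₀] s ^ c.count x₀ := by
  induction c with
  | nil => simp [countPGF, configLaw_nil, PMF.expect_pure]
  | cons y c ih =>
    rw [← List.singleton_append, countPGF_append, List.count_append, pow_add]
    gcongr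
    by_cases hy : y = x₀
    · simp [hy]
    · simpa [List.count_singleton, hy] using countPGF_le_one K off x₀ n [y] hs

/-- The branching property: the particles at `x₀` at time `k` start independent copies of
the process. -/
theorem countPGF_add_le (k n : ℕ) {s : ℝ≥0∞} (hs : s ≤ 1) :
    countPGF K off x₀ (k + n) [x₀] s ≤ countPGF K off x₀ k [x₀] (countPGF K off x₀ n [x₀] s) := by
  rw [countPGF, configLaw_add, PMF.expect_bind]
  exact PMF.expect_mono _ fun c => countPGF_le_pow_count K off x₀ n c hs

theorem countPGF_mul_zero_le {k : ℕ} {s : ℝ≥0∞} (hs : countPGF K off x₀ k [x₀] s ≤ s) (N : ℕ) :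
    countPGF K off x₀ (N * k) [x₀] 0 ≤ s := by
  induction N with
  | zero => simp [countPGF, configLaw, PMF.expect_pure]
  | succ N ih =>
    calc countPGF K off x₀ ((N + 1) * k) [x₀] 0
        = countPGF K off x₀ (k + N * k) [x₀] 0 := by rw [Nat.add_one_mul, Nat.add_comm]
      _ ≤ countPGF K off x₀ k [x₀] (countPGF K off x₀ (N * k) [x₀] 0) :=
          countPGF_add_le K off x₀ k (N * k) zero_le
      _ ≤ countPGF K off x₀ k [x₀] s := countPGF_mono K off x₀ k [x₀] ih
      _ ≤ s := hs

theorem toOuterMeasure_occupied_add_countPGF_zero (n : ℕ) (c : List X) :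
    (configLaw K off n c).toOuterMeasure {d | x₀ ∈ d} + countPGF K off x₀ n c 0 = 1 := by
  rw [PMF.toOuterMeasure_eq_expect, countPGF, ← PMF.expect_add, ← PMF.expect_const _ 1]
  congr 1 with d
  by_cases h : x₀ ∈ d
  · simp [h, (List.count_pos_iff.mpr h).ne']
  · simp [h, List.count_eq_zero.mpr h]

theorem le_alphaBMC_of_frequently {q : ℝ≥0∞}
    (h : ∀ N, ∃ n ≥ N, q ≤ (configLaw K off n [x₀]).toOuterMeasure {d | x₀ ∈ d}) :
    q ≤ alphaBMC K off x₀ := by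
  refine le_iInf fun N => ?_
  obtain ⟨n, hn, hq⟩ := h N
  refine le_iSup_of_le n (hq.trans ?_)
  rw [← map_getD_bmcPaths, PMF.toOuterMeasure_map_apply]
  exact MeasureTheory.measure_mono fun tr htr => ⟨n, hn, htr⟩

end BranchingMarkovChain

open BranchingMarkovChain in
theorem bmc_pruned_supercritical_general {X : Type} [DecidableEq X]
    (K : X → PMF X) (off : X → PMF ℕ) (m : ℝ)
    (hmean : ∀ x, HasSum (fun k : ℕ => (k : ℝ) * ((off x) k).toReal) m)
    (x0 : X) (hρ0 : 0 < specRad (kerReal K) x0)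
    (hm : 1 / specRad (kerReal K) x0 < m) :
    (∃ k : ℕ, 1 ≤ k ∧ 1 < matPow (kerReal K) k x0 x0 * m ^ k) ∧
    0 < alphaBMC K off x0 := by
  obtain ⟨k, hk, hkm⟩ := exists_one_lt_mul_pow_of_inv_limsup_lt
    (fun n => ((isStochastic_kerReal K).matPow_mem_Icc n x0 x0).1) hρ0 hm
  refine ⟨⟨k, hk, hkm⟩, ?_⟩
  have hm₀ : 0 ≤ m := ((one_div_pos.mpr hρ0).trans hm).le
  have hmeanCount : 1 < meanCount K off x0 k [x0] := by
    rw [meanCount_singleton K off x0 _ (fun x => (off x).expect_natCast_eq_ofReal (hmean x)),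
      ← ENNReal.ofReal_pow hm₀, ← ENNReal.ofReal_mul (by positivity), mul_comm]
    exact ENNReal.one_lt_ofReal.mpr hkm
  obtain ⟨s, hs1, hs⟩ := (configLaw K off k [x0]).exists_expect_pow_le_self _ hmeanCount
  refine (tsub_pos_of_lt hs1).trans_le <| le_alphaBMC_of_frequently K off x0 fun N =>
    ⟨N * k, Nat.le_mul_of_pos_right N hk, ?_⟩
  rw [tsub_le_iff_right, ← toOuterMeasure_occupied_add_countPGF_zero K off x0 (N * k) [x0]]
  exact add_le_add_right (countPGF_mul_zero_le K off x0 hs N) _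

/-- Let `m > 1/ρ(P)` with `ρ(P) ∈ (0,1]`. For a BMC with constant mean offspring `m`
started at `x0` there is a `k ≥ 1` with `p^{(k)}(x0,x0)·m^k > 1` (so that the pruned
process of particles at `x0` at times `nk` dominates a supercritical Galton–Watson
process); hence `α(x0) > 0`. -/
theorem bmc_pruned_supercritical {X : Type} [Countable X] [DecidableEq X]
    (K : X → PMF X) (off : X → PMF ℕ) (m : ℝ)
    (hirr : IsIrreducibleKernel (kerReal K))
    (hoff0 : ∀ x, (off x) 0 = 0)
    (hmean : ∀ x, HasSum (fun k : ℕ => (k : ℝ) * ((off x) k).toReal) m)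
    (x0 : X) (hρ0 : 0 < specRad (kerReal K) x0) (hρ1 : specRad (kerReal K) x0 ≤ 1)
    (hm : 1 / specRad (kerReal K) x0 < m) :
    (∃ k : ℕ, 1 ≤ k ∧ 1 < matPow (kerReal K) k x0 x0 * m ^ k) ∧
    0 < alphaBMC K off x0 :=
  bmc_pruned_supercritical_general K off m hmean x0 hρ0 hm
end
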